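/- arXiv:1611.00712 — 3 statements merged into one kernel-verified Lean document; each statement's English description precedes it below -/
import Mathlib

section
/- If G is standard Gumbel and c ∈ ℝ, then c + G is distributed as -log E where E is an exponential random variable with rate exp(c); consequently the argmax over k of {log αₖ + Gₖ} has the same distribution as the argmin over k of independent exponential random variables with rates αₖ. -/
open MeasureTheory Real ProbabilityTheory Filter Topology

/-!
For a standard Gumbel `G`, `P(c + G ≤ t) = exp (-exp c · exp (-t))`, and this is exactly
`P(E ≥ exp (-t)) = P(-log E ≤ t)` for `E` exponential with rate `exp c`.
Read the other way, `x ↦ exp (-x)` sends `log αₖ + Gₖ` to an exponential variable with rate `αₖ`;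
being strictly decreasing, it turns the argmax event into the argmin event. Applied coordinatewise
it keeps the family independent, and independent families with equal marginals have equal joint
laws, so both events have the same probability.
-/

noncomputable def gumbelCDF (g : ℝ) : ℝ := exp (-exp (-g))

noncomputable def exponentialCDF (r x : ℝ) : ℝ := 1 - exp (-r * max x 0)

lemma continuous_gumbelCDF : Continuous gumbelCDF := by
  unfold gumbelCDF; fun_prop

lemma continuous_exponentialCDF (r : ℝ) : Continuous (exponentialCDF r) := by
  unfold exponentialCDF; fun_prop

lemma exponentialCDF_nonneg {r : ℝ} (hr : 0 ≤ r) (x : ℝ) : 0 ≤ exponentialCDF r x := by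
  have : -r * max x 0 ≤ 0 := mul_nonpos_of_nonpos_of_nonneg (neg_nonpos.2 hr) (le_max_right x 0)
  simpa [exponentialCDF] using this

section CDF

variable {Ω : Type*} [MeasurableSpace Ω] {P : Measure Ω} {X : Ω → ℝ} {F : ℝ → ℝ}

lemma measure_lt_eq_of_cdf (hcdf : ∀ x, P {ω | X ω ≤ x} = ENNReal.ofReal (F x)) {x : ℝ}
    (hF : ContinuousWithinAt F (Set.Iio x) x) : P {ω | X ω < x} = ENNReal.ofReal (F x) := by
  obtain ⟨u, hu_mono, hu_lt, hu_lim⟩ := exists_seq_strictMono_tendsto x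
  have hunion : {ω | X ω < x} = ⋃ m, {ω | X ω ≤ u m} := by
    ext ω
    simp only [Set.mem_ofPred_eq, Set.mem_iUnion]
    refine ⟨fun h => ?_, fun ⟨m, hm⟩ => hm.trans_lt (hu_lt m)⟩
    obtain ⟨m, hm⟩ := (hu_lim.eventually (lt_mem_nhds h)).exists
    exact ⟨m, hm.le⟩
  have hmono : Monotone fun m => {ω | X ω ≤ u m} :=
    fun a b hab ω (hω : X ω ≤ u a) => hω.trans (hu_mono.monotone hab)
  have hu_within : Tendsto u atTop (𝓝[<] x) :=
    tendsto_nhdsWithin_of_tendsto_nhds_of_eventually_within u hu_lim (.of_forall hu_lt)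
  refine hunion ▸ tendsto_nhds_unique (tendsto_measure_iUnion_atTop hmono) ?_
  simpa only [Function.comp_def, hcdf] using
    (ENNReal.continuous_ofReal.tendsto (F x)).comp (hF.tendsto.comp hu_within)

lemma measure_ge_eq_of_cdf [IsProbabilityMeasure P] (hX : Measurable X)
    (hcdf : ∀ x, P {ω | X ω ≤ x} = ENNReal.ofReal (F x)) {x : ℝ}
    (hF : ContinuousWithinAt F (Set.Iio x) x) (hF0 : 0 ≤ F x) :
    P {ω | x ≤ X ω} = ENNReal.ofReal (1 - F x) := by
  have hcompl : {ω | x ≤ X ω} = {ω | X ω < x}ᶜ := by ext ω; simp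
  rw [hcompl, prob_compl_eq_one_sub (measurableSet_lt hX measurable_const),
    measure_lt_eq_of_cdf hcdf hF, ENNReal.ofReal_sub _ hF0, ENNReal.ofReal_one]

lemma measure_const_add_le_eq (c t : ℝ) : P {ω | c + X ω ≤ t} = P {ω | X ω ≤ t - c} := by
  congr 1
  ext ω
  simp only [Set.mem_ofPred_eq, le_sub_iff_add_le']

lemma map_eq_map_of_cdf_eq [IsFiniteMeasure P] {Ω' : Type*} [MeasurableSpace Ω'] {P' : Measure Ω'}
    {Y : Ω' → ℝ} (hX : Measurable X) (hY : Measurable Y)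
    (h : ∀ x, P {ω | X ω ≤ x} = P' {ω | Y ω ≤ x}) : P.map X = P'.map Y :=
  Measure.ext_of_Iic _ _ fun x => by
    rw [Measure.map_apply hX measurableSet_Iic, Measure.map_apply hY measurableSet_Iic]
    exact h x

end CDF

lemma map_fun_eq_of_iIndepFun {ι : Type*} [Fintype ι] {Ω Ω' : Type*} [MeasurableSpace Ω]
    [MeasurableSpace Ω'] {P : Measure Ω} {P' : Measure Ω'} {X : ι → Ω → ℝ} {Y : ι → Ω' → ℝ}
    (hX : ∀ i, Measurable (X i)) (hY : ∀ i, Measurable (Y i))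
    (hXind : iIndepFun X P) (hYind : iIndepFun Y P') (hlaw : ∀ i, P.map (X i) = P'.map (Y i)) :
    P.map (fun ω i => X i ω) = P'.map (fun ω i => Y i ω) := by
  rw [hXind.map_fun_eq_pi_map fun i => (hX i).aemeasurable,
    hYind.map_fun_eq_pi_map fun i => (hY i).aemeasurable, funext hlaw]

lemma measure_exp_neg_le_of_gumbel {Ω : Type*} [MeasurableSpace Ω] {P : Measure Ω}
    [IsProbabilityMeasure P] {G : Ω → ℝ} (hGm : Measurable G)
    (hG : ∀ g, P {ω | G ω ≤ g} = ENNReal.ofReal (gumbelCDF g)) {a : ℝ} (ha : 0 < a) (x : ℝ) :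
    P {ω | exp (-(log a + G ω)) ≤ x} = ENNReal.ofReal (exponentialCDF a x) := by
  rcases le_or_gt x 0 with hx | hx
  · have hempty : {ω | exp (-(log a + G ω)) ≤ x} = ∅ :=
      Set.eq_empty_of_forall_notMem fun ω hω => (hx.trans_lt (exp_pos _)).not_ge hω
    rw [hempty, measure_empty, exponentialCDF, max_eq_right hx]
    simp
  · have hevent : {ω | exp (-(log a + G ω)) ≤ x} = {ω | -log x - log a ≤ G ω} := by
      ext ω
      simp only [Set.mem_ofPred_eq, ← le_log_iff_exp_le hx]
      constructor <;> intro <;> linarith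
    rw [hevent, measure_ge_eq_of_cdf hGm hG continuous_gumbelCDF.continuousWithinAt
      (exp_pos _).le]
    congr 1
    rw [gumbelCDF, exponentialCDF, neg_sub, sub_neg_eq_add, exp_add, exp_log hx, exp_log ha,
      max_eq_left hx.le, neg_mul]

lemma measure_neg_log_le_of_exponential {Ω : Type*} [MeasurableSpace Ω] {P : Measure Ω}
    [IsProbabilityMeasure P] {E : Ω → ℝ} (hEm : Measurable E) {r : ℝ} (hr : 0 < r)
    (hE : ∀ x, P {ω | E ω ≤ x} = ENNReal.ofReal (exponentialCDF r x)) (t : ℝ) :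
    P {ω | -log (E ω) ≤ t} = ENNReal.ofReal (gumbelCDF (t - log r)) := by
  have hpos : ∀ᵐ ω ∂P, 0 < E ω := by
    simpa [ae_iff, exponentialCDF] using hE 0
  have hevent : {ω | -log (E ω) ≤ t} =ᵐ[P] {ω | exp (-t) ≤ E ω} := by
    filter_upwards [hpos] with ω hω
    change (-log (E ω) ≤ t) = (exp (-t) ≤ E ω)
    rw [neg_le, ← le_log_iff_exp_le hω]
  rw [measure_congr hevent, measure_ge_eq_of_cdf hEm hE
    (continuous_exponentialCDF r).continuousWithinAt (exponentialCDF_nonneg hr.le _)]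
  rw [gumbelCDF, exponentialCDF, sub_sub_cancel, neg_sub, sub_eq_add_neg, exp_add, exp_log hr,
    max_eq_left (exp_pos _).le, neg_mul]

theorem gumbel_shift_exponential_general
    {Ω : Type*} [MeasurableSpace Ω] (P : Measure Ω) [IsProbabilityMeasure P]
    {Ω' : Type*} [MeasurableSpace Ω'] (P' : Measure Ω') [IsProbabilityMeasure P']
    (c : ℝ) (G : Ω → ℝ)
    (hGumbel : ∀ g : ℝ, P {ω | G ω ≤ g} = ENNReal.ofReal (Real.exp (-Real.exp (-g))))
    (E : Ω' → ℝ) (hE : Measurable E)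
    (hExp : ∀ x : ℝ, P' {ω | E ω ≤ x}
      = ENNReal.ofReal (1 - Real.exp (-(Real.exp c) * max x 0)))
    (n : ℕ) (α : Fin n → ℝ) (hα : ∀ i, 0 < α i)
    (Gs : Fin n → Ω → ℝ) (hGs : ∀ i, Measurable (Gs i))
    (hGsIndep : iIndepFun Gs P)
    (hGsGumbel : ∀ i, ∀ g : ℝ,
      P {ω | Gs i ω ≤ g} = ENNReal.ofReal (Real.exp (-Real.exp (-g))))
    (Es : Fin n → Ω' → ℝ) (hEs : ∀ i, Measurable (Es i))
    (hEsIndep : iIndepFun Es P')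
    (hEsExp : ∀ i, ∀ x : ℝ, P' {ω | Es i ω ≤ x}
      = ENNReal.ofReal (1 - Real.exp (-(α i) * max x 0))) :
    (∀ t : ℝ, P {ω | c + G ω ≤ t} = P' {ω | -Real.log (E ω) ≤ t}) ∧
    (∀ k : Fin n,
      P {ω | ∀ i, i ≠ k → Real.log (α i) + Gs i ω < Real.log (α k) + Gs k ω}
        = P' {ω | ∀ i, i ≠ k → Es k ω < Es i ω}) := by
  refine ⟨fun t => ?_, fun k => ?_⟩
  · rw [measure_const_add_le_eq, hGumbel,
      measure_neg_log_le_of_exponential hE (exp_pos c) hExp, log_exp]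
    rfl
  · let T : Fin n → Ω → ℝ := fun i ω => exp (-(log (α i) + Gs i ω))
    have hT : ∀ i, Measurable (T i) := fun i => ((hGs i).const_add _).neg.exp
    have hTind : iIndepFun T P :=
      hGsIndep.comp (fun i g => exp (-(log (α i) + g))) fun i => by fun_prop
    have hlaw : ∀ i, P.map (T i) = P'.map (Es i) := fun i =>
      map_eq_map_of_cdf_eq (hT i) (hEs i) fun x =>
        (measure_exp_neg_le_of_gumbel (hGs i) (hGsGumbel i) (hα i) x).trans (hEsExp i x).symm
    have hargmin : MeasurableSet {v : Fin n → ℝ | ∀ i, i ≠ k → v k < v i} := by measurability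
    have hargmax : {ω | ∀ i, i ≠ k → log (α i) + Gs i ω < log (α k) + Gs k ω}
        = (fun ω i => T i ω) ⁻¹' {v | ∀ i, i ≠ k → v k < v i} := by
      ext ω
      simp only [Set.mem_preimage, Set.mem_ofPred_eq, T, exp_lt_exp, neg_lt_neg_iff]
    rw [hargmax, ← Measure.map_apply (measurable_pi_lambda _ hT) hargmin,
      map_fun_eq_of_iIndepFun hT hEs hTind hEsIndep hlaw,
      Measure.map_apply (measurable_pi_lambda _ hEs) hargmin]
    rfl

/-- If `G` is standard Gumbel and `c ∈ ℝ`, then `c + G` is distributed as `-log E` where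
`E` is exponential with rate `exp c`; consequently the argmax of `log αₖ + Gₖ` has the
same distribution as the argmin of independent exponentials with rates `αₖ`. -/
theorem gumbel_shift_exponential
    {Ω : Type*} [MeasurableSpace Ω] (P : Measure Ω) [IsProbabilityMeasure P]
    {Ω' : Type*} [MeasurableSpace Ω'] (P' : Measure Ω') [IsProbabilityMeasure P']
    (c : ℝ) (G : Ω → ℝ) (hG : Measurable G)
    (hGumbel : ∀ g : ℝ, P {ω | G ω ≤ g} = ENNReal.ofReal (Real.exp (-Real.exp (-g))))
    (E : Ω' → ℝ) (hE : Measurable E)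
    (hExp : ∀ x : ℝ, P' {ω | E ω ≤ x}
      = ENNReal.ofReal (1 - Real.exp (-(Real.exp c) * max x 0)))
    (n : ℕ) (α : Fin n → ℝ) (hα : ∀ i, 0 < α i)
    (Gs : Fin n → Ω → ℝ) (hGs : ∀ i, Measurable (Gs i))
    (hGsIndep : iIndepFun Gs P)
    (hGsGumbel : ∀ i, ∀ g : ℝ,
      P {ω | Gs i ω ≤ g} = ENNReal.ofReal (Real.exp (-Real.exp (-g))))
    (Es : Fin n → Ω' → ℝ) (hEs : ∀ i, Measurable (Es i))
    (hEsIndep : iIndepFun Es P')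
    (hEsExp : ∀ i, ∀ x : ℝ, P' {ω | Es i ω ≤ x}
      = ENNReal.ofReal (1 - Real.exp (-(α i) * max x 0))) :
    (∀ t : ℝ, P {ω | c + G ω ≤ t} = P' {ω | -Real.log (E ω) ≤ t}) ∧
    (∀ k : Fin n,
      P {ω | ∀ i, i ≠ k → Real.log (α i) + Gs i ω < Real.log (α k) + Gs k ω}
        = P' {ω | ∀ i, i ≠ k → Es k ω < Es i ω}) :=
  gumbel_shift_exponential_general P P' c G hGumbel E hE hExp n α hα Gs hGs hGsIndep hGsGumbel Es
    hEs hEsIndep hEsExp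
end

section
/- (Zero temperature limit) Fix α ∈ (0,∞)ⁿ and i.i.d. standard Gumbels G₁,…,Gₙ, and define X(λ)ₖ = exp((log αₖ + Gₖ)/λ)/∑ᵢ exp((log αᵢ + Gᵢ)/λ). Then P(lim_{λ→0⁺} X(λ)ₖ = 1) = αₖ/(∑ᵢ αᵢ). -/
open MeasureTheory Real ProbabilityTheory Filter Set Topology Function

/-!
Conditioning on `G k = t`, every other `log α i + G i` stays below `log α k + t` with probability
`∏ i ≠ k, exp (-(α i / α k) * exp (-t)) = exp (-c * exp (-t))`, where `c = ∑ i ≠ k, α i / α k`;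
integrating against the Gumbel density `exp (-t - exp (-t))` gives `1 / (1 + c) = α k / ∑ i, α i`.
Summed over `k`, these probabilities of disjoint events add up to one, so almost surely the
maximum of `log α i + G i` is attained at a single index, and as `λ → 0⁺` the softmax
concentrates on that index.
-/

theorem integrableOn_Iic_deriv_of_nonneg' {g g' : ℝ → ℝ} {a l : ℝ}
    (hderiv : ∀ x ∈ Iic a, HasDerivAt g (g' x) x) (g'pos : ∀ x ∈ Iio a, 0 ≤ g' x)
    (hg : Tendsto g atBot (𝓝 l)) : IntegrableOn g' (Iic a) := by
  have hreflected : IntegrableOn (fun x => g' (-x)) (Ioi (-a)) := by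
    refine integrableOn_Ioi_deriv_of_nonneg' (g := fun x => -g (-x)) (l := -l)
      (fun x hx => ?_) (fun x hx => g'pos _ (mem_Iio.mpr (neg_lt.mp hx))) ?_
    · have h : HasDerivAt (fun y => g (-y)) (g' (-x) * -1) x :=
        (hderiv (-x) (mem_Iic.mpr (neg_le.mp hx))).comp x (hasDerivAt_neg x)
      simpa using h.fun_neg
    · exact (hg.comp tendsto_neg_atTop_atBot).neg
  rw [integrableOn_Iic_iff_integrableOn_Iio]
  simpa using hreflected.comp_neg_Iio

theorem integrable_deriv_of_nonneg {g g' : ℝ → ℝ} {l u : ℝ}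
    (hderiv : ∀ x, HasDerivAt g (g' x) x) (g'pos : ∀ x, 0 ≤ g' x)
    (hbot : Tendsto g atBot (𝓝 l)) (htop : Tendsto g atTop (𝓝 u)) : Integrable g' := by
  rw [← integrableOn_univ, ← Iic_union_Ioi (a := 0)]
  exact (integrableOn_Iic_deriv_of_nonneg' (fun x _ => hderiv x) (fun x _ => g'pos x) hbot).union
    (integrableOn_Ioi_deriv_of_nonneg' (fun x _ => hderiv x) (fun x _ => g'pos x) htop)

theorem lintegral_Iic_ofReal_deriv {g g' : ℝ → ℝ} (a : ℝ)
    (hderiv : ∀ x, HasDerivAt g (g' x) x) (g'pos : ∀ x, 0 ≤ g' x)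
    (hbot : Tendsto g atBot (𝓝 0)) :
    ∫⁻ x in Iic a, ENNReal.ofReal (g' x) = ENNReal.ofReal (g a) := by
  have hint := integrableOn_Iic_deriv_of_nonneg' (a := a) (fun x _ => hderiv x)
    (fun x _ => g'pos x) hbot
  rw [← ofReal_integral_eq_lintegral_ofReal hint (.of_forall fun x => g'pos x),
    integral_Iic_of_hasDerivAt_of_tendsto' (fun x _ => hderiv x) hint hbot, sub_zero]

theorem lintegral_ofReal_deriv {g g' : ℝ → ℝ} {u : ℝ}
    (hderiv : ∀ x, HasDerivAt g (g' x) x) (g'pos : ∀ x, 0 ≤ g' x)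
    (hbot : Tendsto g atBot (𝓝 0)) (htop : Tendsto g atTop (𝓝 u)) :
    ∫⁻ x, ENNReal.ofReal (g' x) = ENNReal.ofReal u := by
  have hint := integrable_deriv_of_nonneg hderiv g'pos hbot htop
  rw [← ofReal_integral_eq_lintegral_ofReal hint (.of_forall fun x => g'pos x),
    integral_of_hasDerivAt_of_tendsto hderiv hint hbot htop, sub_zero]

section GumbelCDF

variable {c : ℝ}

theorem hasDerivAt_exp_neg_mul_exp_neg (c t : ℝ) :
    HasDerivAt (fun t => exp (-(c * exp (-t)))) (c * exp (-t - c * exp (-t))) t := by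
  convert ((hasDerivAt_neg t).exp.const_mul (-c)).exp using 1
  · simp only [neg_mul]
  · rw [sub_eq_neg_add, exp_add, neg_mul]
    ring

theorem tendsto_exp_neg_mul_exp_neg_atTop (c : ℝ) :
    Tendsto (fun t => exp (-(c * exp (-t)))) atTop (𝓝 1) := by
  simpa using ((tendsto_exp_neg_atTop_nhds_zero.const_mul c).neg).rexp

theorem tendsto_exp_neg_mul_exp_neg_atBot (hc : 0 < c) :
    Tendsto (fun t => exp (-(c * exp (-t)))) atBot (𝓝 0) :=
  tendsto_exp_atBot.comp <| tendsto_neg_atTop_atBot.comp <|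
    (tendsto_exp_atTop.comp tendsto_neg_atBot_atTop).const_mul_atTop hc

theorem lintegral_Iic_ofReal_mul_exp_sub_mul_exp_neg (hc : 0 < c) (b : ℝ) :
    ∫⁻ t in Iic b, ENNReal.ofReal (c * exp (-t - c * exp (-t)))
      = ENNReal.ofReal (exp (-(c * exp (-b)))) :=
  lintegral_Iic_ofReal_deriv b (hasDerivAt_exp_neg_mul_exp_neg c) (fun _ => by positivity)
    (tendsto_exp_neg_mul_exp_neg_atBot hc)

theorem lintegral_ofReal_mul_exp_sub_mul_exp_neg (hc : 0 < c) :
    ∫⁻ t, ENNReal.ofReal (c * exp (-t - c * exp (-t))) = 1 := by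
  simpa using lintegral_ofReal_deriv (hasDerivAt_exp_neg_mul_exp_neg c) (fun _ => by positivity)
    (tendsto_exp_neg_mul_exp_neg_atBot hc) (tendsto_exp_neg_mul_exp_neg_atTop c)

end GumbelCDF

noncomputable def gumbelMeasure : Measure ℝ :=
  volume.withDensity fun t => ENNReal.ofReal (exp (-t - exp (-t)))

theorem gumbelMeasure_Iic (b : ℝ) :
    gumbelMeasure (Iic b) = ENNReal.ofReal (exp (-exp (-b))) := by
  simpa [gumbelMeasure] using lintegral_Iic_ofReal_mul_exp_sub_mul_exp_neg one_pos b

instance : IsProbabilityMeasure gumbelMeasure :=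
  ⟨by simpa [gumbelMeasure] using lintegral_ofReal_mul_exp_sub_mul_exp_neg one_pos⟩

instance : NullSingletonClass gumbelMeasure := by
  unfold gumbelMeasure
  infer_instance

theorem gumbelMeasure_Iio (b : ℝ) :
    gumbelMeasure (Iio b) = ENNReal.ofReal (exp (-exp (-b))) := by
  rw [measure_congr Iio_ae_eq_Iic, gumbelMeasure_Iic]

/-- For `G` standard Gumbel, `exp (-G)` is standard exponential; this is its Laplace transform. -/
theorem lintegral_exp_neg_mul_exp_neg_gumbelMeasure {c : ℝ} (hc : 0 ≤ c) :
    ∫⁻ t, ENNReal.ofReal (exp (-(c * exp (-t)))) ∂gumbelMeasure = ENNReal.ofReal (1 + c)⁻¹ := by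
  have hc' : 0 < 1 + c := by linarith
  calc ∫⁻ t, ENNReal.ofReal (exp (-(c * exp (-t)))) ∂gumbelMeasure
      = ∫⁻ t, ENNReal.ofReal (1 + c)⁻¹ *
          ENNReal.ofReal ((1 + c) * exp (-t - (1 + c) * exp (-t))) := by
        rw [gumbelMeasure, lintegral_withDensity_eq_lintegral_mul _ (by fun_prop) (by fun_prop)]
        refine lintegral_congr fun t => ?_
        rw [Pi.mul_apply, ← ENNReal.ofReal_mul (exp_pos _).le,
          ← ENNReal.ofReal_mul (inv_pos.mpr hc').le, inv_mul_cancel_left₀ hc'.ne', ← exp_add]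
        ring_nf
    _ = ENNReal.ofReal (1 + c)⁻¹ := by
        rw [lintegral_const_mul _ (by fun_prop), lintegral_ofReal_mul_exp_sub_mul_exp_neg hc',
          mul_one]

theorem gumbelMeasure_pi_forall_add_lt {ι : Type*} [Fintype ι] (a : ι → ℝ) (t : ℝ) :
    Measure.pi (fun _ : ι => gumbelMeasure) {y | ∀ i, a i + y i < t}
      = ENNReal.ofReal (exp (-∑ i, exp (a i - t))) := by
  have hbox : {y : ι → ℝ | ∀ i, a i + y i < t} = univ.pi fun i => Iio (t - a i) := by
    ext y
    simp only [mem_ofPred_eq, mem_univ_pi, mem_Iio, lt_sub_iff_add_lt']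
  rw [hbox, Measure.pi_pi, ← Finset.sum_neg_distrib, exp_sum,
    ENNReal.ofReal_prod_of_nonneg fun i _ => (exp_pos _).le]
  refine Finset.prod_congr rfl fun i _ => ?_
  rw [gumbelMeasure_Iio, neg_sub]

theorem measurableSet_forall_ne_add_lt {ι : Type*} [Countable ι] (a : ι → ℝ) (j : ι) :
    MeasurableSet {x : ι → ℝ | ∀ i ≠ j, a i + x i < a j + x j} := by
  simp only [ofPred_forall]
  exact .iInter fun i => .iInter fun _ => measurableSet_lt (by fun_prop) (by fun_prop)

theorem gumbelMeasure_pi_strictArgmax {n : ℕ} (a : Fin (n + 1) → ℝ) (j : Fin (n + 1)) :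
    Measure.pi (fun _ => gumbelMeasure) {x | ∀ i ≠ j, a i + x i < a j + x j}
      = ENNReal.ofReal (exp (a j) / ∑ i, exp (a i)) := by
  set c := ∑ i : Fin n, exp (a (j.succAbove i) - a j)
  set S := {p : ℝ × (Fin n → ℝ) | ∀ i, a (j.succAbove i) + p.2 i < a j + p.1}
  have hsplit : {x : Fin (n + 1) → ℝ | ∀ i ≠ j, a i + x i < a j + x j}
      = MeasurableEquiv.piFinSuccAbove (fun _ => ℝ) j ⁻¹' S := by
    ext x
    simp only [S, mem_preimage, MeasurableEquiv.piFinSuccAbove_apply, mem_ofPred_eq]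
    refine ⟨fun h i => h _ (Fin.succAbove_ne j i), fun h i hi => ?_⟩
    obtain ⟨i, rfl⟩ := Fin.exists_succAbove_eq hi
    exact h i
  have hS : MeasurableSet S := by
    simp only [S, ofPred_forall]
    exact .iInter fun i => measurableSet_lt (by fun_prop) (by fun_prop)
  have hsection (t : ℝ) :
      exp (-∑ i, exp (a (j.succAbove i) - (a j + t))) = exp (-(c * exp (-t))) := by
    simp only [c, Finset.sum_mul, ← exp_add, sub_eq_add_neg, neg_add, add_assoc]
  have hc : 1 + c = (∑ i, exp (a i)) / exp (a j) := by
    simp only [c, Fin.sum_univ_succAbove _ j, exp_sub, ← Finset.sum_div]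
    field_simp
  rw [hsplit, (measurePreserving_piFinSuccAbove _ j).measure_preimage_equiv,
    Measure.prod_apply hS]
  simp only [S, preimage_ofPred_eq, gumbelMeasure_pi_forall_add_lt, hsection]
  rw [lintegral_exp_neg_mul_exp_neg_gumbelMeasure (by positivity), hc, inv_div]

theorem eq_of_forall_ne_lt {ι α : Type*} [Preorder α] {f : ι → α} {j k : ι}
    (hj : ∀ i ≠ j, f i < f j) (hk : ∀ i ≠ k, f i < f k) : j = k := by
  by_contra hjk
  exact lt_asymm (hj k (Ne.symm hjk)) (hk j hjk)

theorem ae_exists_strictArgmax_gumbelMeasure_pi {n : ℕ} (a : Fin (n + 1) → ℝ) :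
    ∀ᵐ x ∂Measure.pi (fun _ => gumbelMeasure), ∃ j, ∀ i ≠ j, a i + x i < a j + x j := by
  set E : Fin (n + 1) → Set (Fin (n + 1) → ℝ) := fun j => {x | ∀ i ≠ j, a i + x i < a j + x j}
  have hdisj : Pairwise (Disjoint on E) := fun j k hjk =>
    disjoint_left.mpr fun x hj hk => hjk (eq_of_forall_ne_lt hj hk)
  have hunion : Measure.pi (fun _ => gumbelMeasure) (⋃ j, E j) = 1 := by
    rw [measure_iUnion hdisj (measurableSet_forall_ne_add_lt a), tsum_fintype]
    simp only [E, gumbelMeasure_pi_strictArgmax]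
    rw [← ENNReal.ofReal_sum_of_nonneg fun _ _ => by positivity, ← Finset.sum_div,
      div_self (by positivity), ENNReal.ofReal_one]
  -- ties are null because the disjoint events `E j` already have total mass one
  have hae : ⋃ j, E j ∈ ae (Measure.pi fun _ => gumbelMeasure) :=
    mem_ae_iff.mpr ((prob_compl_eq_zero_iff
      (MeasurableSet.iUnion (measurableSet_forall_ne_add_lt a))).mpr hunion)
  filter_upwards [hae] with x hx
  exact mem_iUnion.mp hx

theorem map_eq_gumbelMeasure {Ω : Type*} [MeasurableSpace Ω] {P : Measure Ω}
    [IsProbabilityMeasure P] {Y : Ω → ℝ} (hY : Measurable Y)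
    (hcdf : ∀ g, P {ω | Y ω ≤ g} = ENNReal.ofReal (exp (-exp (-g)))) :
    P.map Y = gumbelMeasure := by
  have := Measure.isProbabilityMeasure_map (μ := P) hY.aemeasurable
  refine Measure.ext_of_Iic _ _ fun g => ?_
  rw [Measure.map_apply hY measurableSet_Iic, gumbelMeasure_Iic]
  exact hcdf g

theorem ProbabilityTheory.iIndepFun.map_eq_pi_gumbelMeasure {Ω ι : Type*} [MeasurableSpace Ω]
    {P : Measure Ω} [IsProbabilityMeasure P] [Fintype ι] {G : ι → Ω → ℝ}
    (hG : ∀ i, Measurable (G i)) (hIndep : iIndepFun G P)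
    (hcdf : ∀ i g, P {ω | G i ω ≤ g} = ENNReal.ofReal (exp (-exp (-g)))) :
    P.map (fun ω i => G i ω) = Measure.pi fun _ => gumbelMeasure := by
  rw [hIndep.map_fun_eq_pi_map fun i => (hG i).aemeasurable]
  simp only [map_eq_gumbelMeasure (hG _) (hcdf _)]

theorem tendsto_softmax_div_nhdsGT_zero {ι : Type*} [Fintype ι] [DecidableEq ι] {a : ι → ℝ}
    {j : ι} (hj : ∀ i ≠ j, a i < a j) (k : ι) :
    Tendsto (fun l => exp (a k / l) / ∑ i, exp (a i / l)) (𝓝[>] 0)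
      (𝓝 (if k = j then 1 else 0)) := by
  have hshift (l : ℝ) : exp (a k / l) / ∑ i, exp (a i / l)
      = exp ((a k - a j) / l) / ∑ i, exp ((a i - a j) / l) := by
    have h (i : ι) : exp (a i / l) = exp (a j / l) * exp ((a i - a j) / l) := by
      rw [← exp_add, ← add_div, add_sub_cancel]
    rw [h k, Finset.sum_congr rfl fun i _ => h i, ← Finset.mul_sum,
      mul_div_mul_left _ _ (exp_ne_zero _)]
  have hterm (i : ι) : Tendsto (fun l => exp ((a i - a j) / l)) (𝓝[>] 0)
      (𝓝 (if i = j then 1 else 0)) := by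
    split_ifs with hij
    · simp [hij]
    · refine tendsto_exp_atBot.comp <|
        (tendsto_inv_nhdsGT_zero.const_mul_atTop_of_neg (sub_neg.mpr (hj i hij))).congr
        fun l => (div_eq_mul_inv _ _).symm
  have hsum : Tendsto (fun l => ∑ i, exp ((a i - a j) / l)) (𝓝[>] 0) (𝓝 1) := by
    simpa using tendsto_finsetSum Finset.univ fun i _ => hterm i
  have hquot := (hterm k).div hsum one_ne_zero
  rw [div_one] at hquot
  exact hquot.congr fun l => (hshift l).symm

/-- Zero temperature limit of the Concrete distribution. -/
theorem concrete_zero_temperature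
    {Ω : Type*} [MeasurableSpace Ω] (P : Measure Ω) [IsProbabilityMeasure P]
    (n : ℕ) (α : Fin n → ℝ) (hα : ∀ i, 0 < α i)
    (G : Fin n → Ω → ℝ) (hG : ∀ i, Measurable (G i))
    (hIndep : iIndepFun G P)
    (hGumbel : ∀ i, ∀ g : ℝ,
      P {ω | G i ω ≤ g} = ENNReal.ofReal (Real.exp (-Real.exp (-g))))
    (X : ℝ → Fin n → Ω → ℝ)
    (hX : ∀ l k ω, X l k ω = Real.exp ((Real.log (α k) + G k ω) / l)
        / ∑ i, Real.exp ((Real.log (α i) + G i ω) / l)) :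
    ∀ k : Fin n,
      P {ω | Tendsto (fun l => X l k ω) (nhdsWithin 0 (Set.Ioi 0)) (nhds 1)}
        = ENNReal.ofReal (α k / ∑ i, α i) := by
  intro k
  rcases n with _ | n
  · exact k.elim0
  set a : Fin (n + 1) → ℝ := fun i => log (α i)
  set Y : Ω → Fin (n + 1) → ℝ := fun ω i => G i ω
  have hY : Measurable Y := measurable_pi_lambda _ hG
  have hlaw : P.map Y = Measure.pi fun _ => gumbelMeasure :=
    hIndep.map_eq_pi_gumbelMeasure hG hGumbel
  have hargmax : ∀ᵐ ω ∂P, ∃ j, ∀ i ≠ j, a i + Y ω i < a j + Y ω j :=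
    ae_of_ae_map hY.aemeasurable (hlaw ▸ ae_exists_strictArgmax_gumbelMeasure_pi a)
  have hwin : P (Y ⁻¹' {x | ∀ i ≠ k, a i + x i < a k + x k})
      = ENNReal.ofReal (α k / ∑ i, α i) := by
    rw [← Measure.map_apply hY (measurableSet_forall_ne_add_lt a k), hlaw,
      gumbelMeasure_pi_strictArgmax]
    simp only [a, exp_log (hα _)]
  rw [← hwin]
  refine measure_congr (hargmax.mono fun ω ⟨j, hj⟩ => propext ?_)
  have hlim : Tendsto (fun l => X l k ω) (𝓝[>] 0) (𝓝 (if k = j then 1 else 0)) := by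
    simpa only [hX] using tendsto_softmax_div_nhdsGT_zero hj k
  change Tendsto _ _ _ ↔ ∀ i ≠ k, a i + Y ω i < a k + Y ω k
  constructor
  · intro hone
    obtain rfl : k = j := by
      by_contra hkj
      rw [if_neg hkj] at hlim
      exact one_ne_zero (tendsto_nhds_unique hone hlim)
    exact hj
  · intro hk
    obtain rfl := eq_of_forall_ne_lt hj hk
    simpa using hlim
end

section
/- (Binary rounding) If X ~ BinaryConcrete(α, λ), i.e., X = σ((log α + L)/λ) with L standard Logistic, then P(X > 1/2) = α/(1+α). -/
open MeasureTheory Real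

lemma one_div_one_add_exp_neg (t : ℝ) : 1 / (1 + exp (-t)) = sigmoid t := by
  rw [sigmoid_def, one_div]

lemma sigmoid_log {α : ℝ} (hα : 0 < α) : sigmoid (log α) = α / (1 + α) := by
  rw [sigmoid_def, exp_neg, exp_log hα]
  field_simp
  ring

lemma half_lt_sigmoid_iff {t : ℝ} : 1 / 2 < sigmoid t ↔ 0 < t := by
  rw [one_div, ← sigmoid_zero, sigmoid_lt_iff]

lemma measure_lt_of_forall_measure_le_eq_sigmoid {Ω : Type*} [MeasurableSpace Ω]
    {P : Measure Ω} [IsProbabilityMeasure P] {L : Ω → ℝ} (hL : Measurable L)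
    (hLogistic : ∀ t : ℝ, P {ω | L ω ≤ t} = ENNReal.ofReal (sigmoid t)) (t : ℝ) :
    P {ω | t < L ω} = ENNReal.ofReal (sigmoid (-t)) := by
  have hcompl : {ω | t < L ω} = {ω | L ω ≤ t}ᶜ := by
    ext ω
    simp
  rw [hcompl, prob_compl_eq_one_sub (measurableSet_le hL measurable_const), hLogistic, sigmoid_neg,
    ← ENNReal.ofReal_one, ENNReal.ofReal_sub _ (sigmoid_nonneg t)]

lemma half_lt_sigmoid_div_iff {α l x : ℝ} (hl : 0 < l) :
    1 / 2 < sigmoid ((log α + x) / l) ↔ -log α < x := by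
  rw [half_lt_sigmoid_iff, div_pos_iff_of_pos_right hl, neg_lt_iff_pos_add']

/-- Binary rounding: `P(X > 1/2) = α/(1+α)` for `X ~ BinaryConcrete(α, λ)`. -/
theorem binary_concrete_rounding
    {Ω : Type*} [MeasurableSpace Ω] (P : Measure Ω) [IsProbabilityMeasure P]
    (α l : ℝ) (hα : 0 < α) (hl : 0 < l)
    (L : Ω → ℝ) (hL : Measurable L)
    (hLogistic : ∀ t : ℝ, P {ω | L ω ≤ t} = ENNReal.ofReal (1 / (1 + Real.exp (-t)))) :
    P {ω | 1 / 2 < 1 / (1 + Real.exp (-((Real.log α + L ω) / l)))}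
      = ENNReal.ofReal (α / (1 + α)) := by
  simp_rw [one_div_one_add_exp_neg] at hLogistic ⊢
  simp_rw [half_lt_sigmoid_div_iff hl]
  rw [measure_lt_of_forall_measure_le_eq_sigmoid hL hLogistic, neg_neg, sigmoid_log hα]
end
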